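/- Let M^+ be the linear operator on the complex vector space with basis {e_m : m even characteristic in F_2^{2g}} defined by M^+(e_m) = sum over even n of e(m,n) e_n, where e(m,n) = (-1)^{<m,n>}. Then M^+ has exactly two eigenvalues, -2^{g-1} and 2^g, the space decomposes as the direct sum of the corresponding eigenspaces V^+ and W^+, and dim V^+ = (2^{2g}-1)/3, dim W^+ = (2^g+1)(2^{g-1}+1)/3. -/
import Mathlib


open Matrix BigOperators

/-- A characteristic: a vector in `F₂^{2g}`, indexed by `Fin g ⊕ Fin g`
(the first block is `a`, the second is `b`). -/
abbrev Char2 (g : ℕ) := (Fin g ⊕ Fin g) → ZMod 2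

/-- The `a`-part of a characteristic. -/
def aPart {g : ℕ} (m : Char2 g) : Fin g → ZMod 2 := fun i => m (Sum.inl i)

/-- The `b`-part of a characteristic. -/
def bPart {g : ℕ} (m : Char2 g) : Fin g → ZMod 2 := fun i => m (Sum.inr i)

/-- A characteristic `m = (a;b)` is even if `a'b = 0`. -/
def IsEvenChar {g : ℕ} (m : Char2 g) : Prop := aPart m ⬝ᵥ bPart m = 0

/-- A characteristic `m = (a;b)` is odd if `a'b = 1`. -/
def IsOddChar {g : ℕ} (m : Char2 g) : Prop := aPart m ⬝ᵥ bPart m = 1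

instance {g : ℕ} : DecidablePred (IsEvenChar (g := g)) := fun m => by
  unfold IsEvenChar; infer_instance

instance {g : ℕ} : DecidablePred (IsOddChar (g := g)) := fun m => by
  unfold IsOddChar; infer_instance

/-- The type of `2g × 2g` matrices over `F₂`. -/
abbrev SpMat (g : ℕ) := Matrix (Fin g ⊕ Fin g) (Fin g ⊕ Fin g) (ZMod 2)

/-- The offset `((CD')₀ ; (AB')₀)` appearing in the affine action. -/
def offVec {g : ℕ} (σ : SpMat g) : Char2 g :=
  Sum.elim (Matrix.diag (σ.toBlocks₂₁ * (σ.toBlocks₂₂)ᵀ))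
           (Matrix.diag (σ.toBlocks₁₁ * (σ.toBlocks₁₂)ᵀ))

/-- The affine action `σ{m} = (σ')⁻¹ m + ((CD')₀ ; (AB')₀)`. -/
noncomputable def affAct {g : ℕ} (σ : SpMat g) (m : Char2 g) : Char2 g :=
  (σᵀ)⁻¹ *ᵥ m + offVec σ

/-- The sign `(-1)^x` for `x : F₂`. -/
def sgn2 (x : ZMod 2) : ℤ := if x = 0 then 1 else -1

/-- The quadratic form `M[x] = x' M x`. -/
def quadF {g : ℕ} (M : Matrix (Fin g) (Fin g) (ZMod 2)) (x : Fin g → ZMod 2) : ZMod 2 :=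
  x ⬝ᵥ (M *ᵥ x)

/-- `ε_m(σ) = (-1)^{tr(B'C) + (B'D)[a] + (A'C)[b]}`. -/
def epsChar {g : ℕ} (m : Char2 g) (σ : SpMat g) : ℤ :=
  sgn2 (Matrix.trace ((σ.toBlocks₁₂)ᵀ * σ.toBlocks₂₁)
    + quadF ((σ.toBlocks₁₂)ᵀ * σ.toBlocks₂₂) (aPart m)
    + quadF ((σ.toBlocks₁₁)ᵀ * σ.toBlocks₂₁) (bPart m))

/-- The symplectic pairing `<m,n> = a'β + b'α`. -/
def pairing {g : ℕ} (m n : Char2 g) : ZMod 2 :=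
  aPart m ⬝ᵥ bPart n + bPart m ⬝ᵥ aPart n

/-- `e(m,n) = (-1)^{<m,n>}`. -/
def eSign {g : ℕ} (m n : Char2 g) : ℤ := sgn2 (pairing m n)

/-- Fay's operator `M⁺` on the space of functions on even characteristics,
sending `e_m` to `∑_{n even} e(m,n) e_n`. -/
noncomputable def fayMplus (g : ℕ) :
    Module.End ℂ ({m : Char2 g // IsEvenChar m} → ℂ) :=
  Matrix.toLin' (Matrix.of fun m n : {m : Char2 g // IsEvenChar m} =>
    ((eSign m.1 n.1 : ℤ) : ℂ))

-- helpers
lemma sgn2_add (x y : ZMod 2) : sgn2 (x + y) = sgn2 x * sgn2 y := by revert x y; decide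

lemma sgn2_sum {ι : Type*} (s : Finset ι) (h : ι → ZMod 2) :
    sgn2 (∑ i ∈ s, h i) = ∏ i ∈ s, sgn2 (h i) := by
  induction s using Finset.cons_induction with
  | empty => simp [sgn2]
  | cons a s ha ih => rw [Finset.sum_cons, Finset.prod_cons, sgn2_add, ih]

def pairEquiv (g : ℕ) : (Fin g → ZMod 2 × ZMod 2) ≃ Char2 g where
  toFun q := Sum.elim (fun i => (q i).1) (fun i => (q i).2)
  invFun p i := (p (Sum.inl i), p (Sum.inr i))
  left_inv q := by funext i; simp
  right_inv p := by funext x; cases x <;> simp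

lemma aPart_pairEquiv {g : ℕ} (q : Fin g → ZMod 2 × ZMod 2) (i : Fin g) :
    aPart (pairEquiv g q) i = (q i).1 := rfl
lemma bPart_pairEquiv {g : ℕ} (q : Fin g → ZMod 2 × ZMod 2) (i : Fin g) :
    bPart (pairEquiv g q) i = (q i).2 := rfl

lemma sum_sgn2_linear {g : ℕ} (v : Char2 g) :
    ∑ p : Char2 g, sgn2 (pairing v p) = if v = 0 then 4 ^ g else 0 := by
  have key : ∀ α β : ZMod 2, (∑ t : ZMod 2 × ZMod 2, sgn2 (α * t.2 + β * t.1))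
      = if α = 0 ∧ β = 0 then 4 else 0 := by decide
  rw [← (pairEquiv g).sum_comp (fun p => sgn2 (pairing v p))]
  have : ∀ q : Fin g → ZMod 2 × ZMod 2, pairing v (pairEquiv g q)
      = ∑ i : Fin g, (aPart v i * (q i).2 + bPart v i * (q i).1) := by
    intro q
    simp only [pairing, dotProduct, aPart_pairEquiv, bPart_pairEquiv, ← Finset.sum_add_distrib]
  simp_rw [this, sgn2_sum]
  rw [← Fintype.piFinset_univ, ← Finset.prod_univ_sum (fun _ => (Finset.univ : Finset (ZMod 2 × ZMod 2)))
    (fun i t => sgn2 (aPart v i * t.2 + bPart v i * t.1))]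
  simp_rw [key]
  by_cases hv : v = 0
  · subst hv
    simp [aPart, bPart, Pi.zero_apply]
  · rw [if_neg hv]
    have : ∃ i : Fin g, ¬(aPart v i = 0 ∧ bPart v i = 0) := by
      by_contra hcon
      push_neg at hcon
      apply hv
      funext x
      cases x with
      | inl i => exact (hcon i).1
      | inr i => exact (hcon i).2
    obtain ⟨i, hi⟩ := this
    exact Finset.prod_eq_zero (Finset.mem_univ i) (by rw [if_neg hi])

lemma sum_sgn2_quad {g : ℕ} (v : Char2 g) :
    ∑ p : Char2 g, sgn2 (pairing v p + aPart p ⬝ᵥ bPart p)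
      = 2 ^ g * sgn2 (aPart v ⬝ᵥ bPart v) := by
  have key : ∀ α β : ZMod 2, (∑ t : ZMod 2 × ZMod 2, sgn2 (α * t.2 + β * t.1 + t.1 * t.2))
      = 2 * sgn2 (α * β) := by decide
  rw [← (pairEquiv g).sum_comp (fun p => sgn2 (pairing v p + aPart p ⬝ᵥ bPart p))]
  have : ∀ q : Fin g → ZMod 2 × ZMod 2,
      pairing v (pairEquiv g q) + aPart (pairEquiv g q) ⬝ᵥ bPart (pairEquiv g q)
      = ∑ i : Fin g, (aPart v i * (q i).2 + bPart v i * (q i).1 + (q i).1 * (q i).2) := by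
    intro q
    simp only [pairing, dotProduct, aPart_pairEquiv, bPart_pairEquiv, ← Finset.sum_add_distrib]
  simp_rw [this, sgn2_sum]
  rw [← Fintype.piFinset_univ, ← Finset.prod_univ_sum (fun _ => (Finset.univ : Finset (ZMod 2 × ZMod 2)))
    (fun i t => sgn2 (aPart v i * t.2 + bPart v i * t.1 + t.1 * t.2))]
  simp_rw [key]
  rw [Finset.prod_mul_distrib, Finset.prod_const, ← sgn2_sum]
  simp [dotProduct, Finset.card_univ]

lemma two_mul_sum_even {g : ℕ} (F : Char2 g → ℤ) :
    2 * ∑ p : {m : Char2 g // IsEvenChar m}, F p.1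
      = ∑ p : Char2 g, (1 + sgn2 (aPart p ⬝ᵥ bPart p)) * F p := by
  rw [Finset.mul_sum, ← Finset.sum_subtype (Finset.univ.filter IsEvenChar)
    (fun x => by simp) (fun p => 2 * F p), Finset.sum_filter]
  refine Finset.sum_congr rfl fun p _ => ?_
  by_cases hp : IsEvenChar p
  · rw [if_pos hp]
    unfold IsEvenChar at hp
    rw [hp]
    simp [sgn2]
  · rw [if_neg hp]
    have : sgn2 (aPart p ⬝ᵥ bPart p) = -1 := by
      unfold IsEvenChar at hp
      simp [sgn2, hp]
    rw [this]
    ring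

lemma char2_add_eq_zero {g : ℕ} (m n : Char2 g) : m + n = 0 ↔ m = n := by
  have h2 : ∀ a b : ZMod 2, a + b = 0 ↔ a = b := by decide
  simp [funext_iff, h2]

lemma pairing_add_left {g : ℕ} (m n p : Char2 g) :
    pairing (m + n) p = pairing m p + pairing n p := by
  have ha : aPart (m + n) = aPart m + aPart n := rfl
  have hb : bPart (m + n) = bPart m + bPart n := rfl
  simp only [pairing, ha, hb, add_dotProduct]
  ring

lemma pairing_comm {g : ℕ} (m n : Char2 g) : pairing m n = pairing n m := by
  simp only [pairing, dotProduct_comm]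
  ring

lemma key_sum {g : ℕ} (hg : 1 ≤ g) (m n : Char2 g) (hm : IsEvenChar m) (hn : IsEvenChar n) :
    ∑ p : {m : Char2 g // IsEvenChar m}, sgn2 (pairing m p.1) * sgn2 (pairing p.1 n)
      = 2 ^ (g - 1) * sgn2 (pairing m n) + (if m = n then 2 ^ (2 * g - 1) else 0) := by
  have h2g : (2 : ℤ) ^ g = 2 * 2 ^ (g - 1) := by
    rw [← pow_succ']
    congr 1
    omega
  have h22g : (4 : ℤ) ^ g = 2 * 2 ^ (2 * g - 1) := by
    have : (4 : ℤ) ^ g = 2 ^ (2 * g) := by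
      rw [show (4:ℤ) = 2^2 by norm_num, ← pow_mul]
    rw [this, ← pow_succ']
    congr 1
    omega
  apply mul_left_cancel₀ (two_ne_zero (α := ℤ))
  have hv : ∀ p : Char2 g, sgn2 (pairing m p) * sgn2 (pairing p n)
      = sgn2 (pairing (m + n) p) := by
    intro p
    rw [pairing_add_left, sgn2_add, pairing_comm p n]
  simp_rw [hv]
  rw [two_mul_sum_even (fun p => sgn2 (pairing (m + n) p))]
  have expand : ∀ p : Char2 g, (1 + sgn2 (aPart p ⬝ᵥ bPart p)) * sgn2 (pairing (m + n) p)
      = sgn2 (pairing (m + n) p) + sgn2 (pairing (m + n) p + aPart p ⬝ᵥ bPart p) := by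
    intro p
    rw [sgn2_add]
    ring
  simp_rw [expand]
  rw [Finset.sum_add_distrib, sum_sgn2_linear, sum_sgn2_quad]
  have hvv : aPart (m + n) ⬝ᵥ bPart (m + n) = pairing m n := by
    have ha : aPart (m + n) = aPart m + aPart n := rfl
    have hb : bPart (m + n) = bPart m + bPart n := rfl
    rw [ha, hb, add_dotProduct, dotProduct_add, dotProduct_add]
    unfold IsEvenChar at hm hn
    rw [hm, hn, pairing, dotProduct_comm (bPart m) (aPart n)]
    ring
  rw [hvv]
  simp only [char2_add_eq_zero]
  by_cases hmn : m = n
  · rw [if_pos hmn, if_pos hmn, h2g, h22g]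
    ring
  · rw [if_neg hmn, if_neg hmn, h2g]
    ring

lemma card_even {g : ℕ} (hg : 1 ≤ g) :
    (Fintype.card {m : Char2 g // IsEvenChar m}) = 2 ^ (2 * g - 1) + 2 ^ (g - 1) := by
  have h := two_mul_sum_even (g := g) (fun _ => (1 : ℤ))
  simp only [mul_one] at h
  rw [Finset.sum_const, Finset.card_univ, nsmul_eq_mul, mul_one] at h
  have hsplit : ∑ p : Char2 g, (1 + sgn2 (aPart p ⬝ᵥ bPart p))
      = ∑ p : Char2 g, (1:ℤ) + ∑ p : Char2 g, sgn2 (aPart p ⬝ᵥ bPart p) :=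
    Finset.sum_add_distrib
  have hquad : ∑ p : Char2 g, sgn2 (aPart p ⬝ᵥ bPart p) = 2 ^ g := by
    have := sum_sgn2_quad (g := g) 0
    have hz : ∀ p : Char2 g, pairing 0 p = 0 := by
      intro p
      show aPart (0 : Char2 g) ⬝ᵥ bPart p + bPart (0 : Char2 g) ⬝ᵥ aPart p = 0
      have ha : aPart (0 : Char2 g) = 0 := rfl
      have hb : bPart (0 : Char2 g) = 0 := rfl
      rw [ha, hb, zero_dotProduct, zero_dotProduct, add_zero]
    simp_rw [hz, zero_add] at this
    rw [this]
    have hz2 : aPart (0 : Char2 g) ⬝ᵥ bPart (0 : Char2 g) = 0 := by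
      have ha : aPart (0 : Char2 g) = 0 := rfl
      rw [ha, zero_dotProduct]
    rw [hz2]
    simp [sgn2]
  have hcard : ∑ p : Char2 g, (1:ℤ) = 4 ^ g := by
    rw [Finset.sum_const, Finset.card_univ, nsmul_eq_mul, mul_one]
    have : Fintype.card (Char2 g) = 2 ^ (2 * g) := by
      simp [Fintype.card_fun, Fintype.card_sum, Fintype.card_fin, ZMod]
      ring
    rw [this]
    push_cast
    rw [show (4:ℤ) = 2^2 by norm_num, ← pow_mul]
  rw [hsplit, hquad, hcard] at h
  have h4 : (4 : ℤ) ^ g = 2 * 2 ^ (2 * g - 1) := by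
    rw [show (4:ℤ) = 2^2 by norm_num, ← pow_mul, ← pow_succ']
    congr 1
    omega
  have h2 : (2 : ℤ) ^ g = 2 * 2 ^ (g - 1) := by
    rw [← pow_succ']
    congr 1
    omega
  rw [h4, h2] at h
  have : (Fintype.card {m : Char2 g // IsEvenChar m} : ℤ)
      = 2 ^ (2 * g - 1) + 2 ^ (g - 1) := by linarith
  exact_mod_cast this

noncomputable def Emat (g : ℕ) :
    Matrix {m : Char2 g // IsEvenChar m} {m : Char2 g // IsEvenChar m} ℂ :=
  Matrix.of fun m n => ((eSign m.1 n.1 : ℤ) : ℂ)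

lemma fayMplus_eq (g : ℕ) : fayMplus g = Matrix.toLin' (Emat g) := rfl

lemma Emat_sq {g : ℕ} (hg : 1 ≤ g) :
    Emat g * Emat g = ((2:ℂ) ^ (g-1)) • Emat g + ((2:ℂ) ^ (2*g-1)) • 1 := by
  ext m n
  have := key_sum hg m.1 n.1 m.2 n.2
  simp only [Matrix.mul_apply, Emat, Matrix.of_apply, Matrix.add_apply, Matrix.smul_apply,
    Matrix.one_apply, eSign, smul_eq_mul]
  have cast1 : ∑ p : {m : Char2 g // IsEvenChar m},
      ((sgn2 (pairing m.1 p.1) : ℤ) : ℂ) * ((sgn2 (pairing p.1 n.1) : ℤ) : ℂ)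
      = ((∑ p : {m : Char2 g // IsEvenChar m},
          sgn2 (pairing m.1 p.1) * sgn2 (pairing p.1 n.1) : ℤ) : ℂ) := by
    push_cast
    rfl
  rw [cast1, this]
  push_cast
  by_cases hmn : m = n
  · rw [if_pos hmn, if_pos (Subtype.ext_iff.mp hmn)]
    ring
  · rw [if_neg hmn, if_neg (fun h => hmn (Subtype.ext h))]
    ring

lemma fay_sq {g : ℕ} (hg : 1 ≤ g) :
    fayMplus g * fayMplus g
      = ((2:ℂ) ^ (g-1)) • fayMplus g + ((2:ℂ) ^ (2*g-1)) • (1 : Module.End ℂ _) := by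
  have : fayMplus g * fayMplus g = Matrix.toLin' (Emat g * Emat g) := by
    rw [Matrix.toLin'_mul, fayMplus_eq]
    rfl
  rw [this, Emat_sq hg, map_add, _root_.map_smul, _root_.map_smul, Matrix.toLin'_one, ← fayMplus_eq]
  rfl

lemma fay_factor {g : ℕ} (hg : 1 ≤ g) :
    (fayMplus g - ((2:ℂ)^g) • 1) * (fayMplus g + ((2:ℂ)^(g-1)) • 1) = 0 := by
  have hb : (2:ℂ)^g = 2 * (2:ℂ)^(g-1) := by rw [← pow_succ']; congr 1; omega
  have hcc : (2:ℂ)^(2*g-1) = 2 * ((2:ℂ)^(g-1) * (2:ℂ)^(g-1)) := by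
    rw [← mul_assoc, ← pow_succ', ← pow_add]; congr 1; omega
  have h := fay_sq hg
  simp only [sub_mul, mul_add, smul_mul_assoc, mul_smul_comm, one_mul, mul_one, smul_smul] at *
  rw [h, hb, hcc]
  module

lemma fay_factor' {g : ℕ} (hg : 1 ≤ g) :
    (fayMplus g + ((2:ℂ)^(g-1)) • 1) * (fayMplus g - ((2:ℂ)^g) • 1) = 0 := by
  have comm : Commute (fayMplus g - ((2:ℂ)^g) • 1) (fayMplus g + ((2:ℂ)^(g-1)) • 1) := by
    have h1 : Commute (fayMplus g) (fayMplus g + ((2:ℂ)^(g-1)) • 1) :=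
      (Commute.refl _).add_right (((Commute.one_right (fayMplus g))).smul_right _)
    have h2 : Commute (((2:ℂ)^g) • (1 : Module.End ℂ _)) (fayMplus g + ((2:ℂ)^(g-1)) • 1) :=
      ((Commute.one_left _).smul_left _)
    exact h1.sub_left h2
  rw [← comm.eq, fay_factor hg]


/-- the operator `M⁺` has exactly the two eigenvalues `-2^{g-1}`
and `2^g`, the whole space is the direct sum of the two eigenspaces `V⁺`, `W⁺`,
and `dim V⁺ = (2^{2g}-1)/3`, `dim W⁺ = (2^g+1)(2^{g-1}+1)/3`. -/
theorem fay_Mplus_spectrum (g : ℕ) (hg : 1 ≤ g) :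
    Module.End.HasEigenvalue (fayMplus g) (-(2 : ℂ) ^ (g - 1)) ∧
    Module.End.HasEigenvalue (fayMplus g) ((2 : ℂ) ^ g) ∧
    (∀ μ : ℂ, Module.End.HasEigenvalue (fayMplus g) μ →
      μ = -(2 : ℂ) ^ (g - 1) ∨ μ = (2 : ℂ) ^ g) ∧
    IsCompl (Module.End.eigenspace (fayMplus g) (-(2 : ℂ) ^ (g - 1)))
      (Module.End.eigenspace (fayMplus g) ((2 : ℂ) ^ g)) ∧
    Module.finrank ℂ (Module.End.eigenspace (fayMplus g) (-(2 : ℂ) ^ (g - 1)))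
      = (2 ^ (2 * g) - 1) / 3 ∧
    Module.finrank ℂ (Module.End.eigenspace (fayMplus g) ((2 : ℂ) ^ g))
      = (2 ^ g + 1) * (2 ^ (g - 1) + 1) / 3 := by
  classical
  set f := fayMplus g with hf
  set c : ℂ := (2:ℂ) ^ (g - 1) with hc
  have hcne : c ≠ 0 := pow_ne_zero _ two_ne_zero
  have hb : (2:ℂ)^g = 2 * c := by rw [hc, ← pow_succ']; congr 1; omega
  have h3ne : (3 : ℂ) * c ≠ 0 := mul_ne_zero (by norm_num) hcne
  set V := Module.End.eigenspace f (-(2:ℂ)^(g-1)) with hV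
  set W := Module.End.eigenspace f ((2:ℂ)^g) with hW
  have hmemV : ∀ x, x ∈ V ↔ f x = (-c) • x := fun x => Module.End.mem_eigenspace_iff
  have hmemW : ∀ x, x ∈ W ↔ f x = ((2:ℂ)^g) • x := fun x => Module.End.mem_eigenspace_iff
  have hfac := fay_factor hg
  have hfac' := fay_factor' hg
  have hWmem : ∀ x, (f + c • 1) x ∈ W := by
    intro x
    rw [hmemW]
    have h0 : ((f - ((2:ℂ)^g) • 1) * (f + c • 1)) x = 0 := by rw [hfac]; rfl
    rw [Module.End.mul_apply, LinearMap.sub_apply, LinearMap.smul_apply,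
      Module.End.one_apply] at h0
    exact sub_eq_zero.mp h0
  have hVmem : ∀ x, (f - ((2:ℂ)^g) • 1) x ∈ V := by
    intro x
    rw [hmemV]
    have h0 : ((f + c • 1) * (f - ((2:ℂ)^g) • 1)) x = 0 := by rw [hfac']; rfl
    rw [Module.End.mul_apply, LinearMap.add_apply, LinearMap.smul_apply,
      Module.End.one_apply] at h0
    have := eq_neg_of_add_eq_zero_left h0
    rw [this, neg_smul]
  have huniq : ∀ μ : ℂ, Module.End.HasEigenvalue f μ → μ = -(2:ℂ)^(g-1) ∨ μ = (2:ℂ)^g := by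
    intro μ hμ
    obtain ⟨x, hx⟩ := hμ.exists_hasEigenvector
    have hxe : f x = μ • x := hx.apply_eq_smul
    have h0 : ((f - ((2:ℂ)^g) • 1) * (f + c • 1)) x = 0 := by rw [hfac]; rfl
    have h1 : (f + c • 1) x = (μ + c) • x := by
      rw [LinearMap.add_apply, LinearMap.smul_apply, Module.End.one_apply, hxe, add_smul]
    have h2 : (f - ((2:ℂ)^g) • 1) ((μ + c) • x) = ((μ - (2:ℂ)^g) * (μ + c)) • x := by
      rw [LinearMap.sub_apply, LinearMap.smul_apply, Module.End.one_apply,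
        _root_.map_smul, hxe, smul_smul, smul_smul, ← sub_smul]
      rw [show (μ + c) * μ - (2:ℂ)^g * (μ + c) = (μ - (2:ℂ)^g) * (μ + c) by ring]
    rw [Module.End.mul_apply, h1, h2] at h0
    rcases smul_eq_zero.mp h0 with h | h
    · rcases mul_eq_zero.mp h with h | h
      · right; exact sub_eq_zero.mp h
      · left; exact eq_neg_of_add_eq_zero_left h
    · exact absurd h hx.2
  have hdisj : Disjoint V W := by
    rw [Submodule.disjoint_def]
    intro x hxV hxW
    rw [hmemV] at hxV
    rw [hmemW] at hxW
    have h0 : ((2:ℂ)^g + c) • x = 0 := by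
      rw [add_smul, ← hxW, ← neg_neg (c • x), ← neg_smul, ← hxV, add_neg_cancel]
    have h3 : ((2:ℂ)^g + c) = 3 * c := by rw [hb]; ring
    rw [h3] at h0
    exact (smul_eq_zero.mp h0).resolve_left h3ne
  have hcodis : Codisjoint V W := by
    rw [codisjoint_iff, eq_top_iff]
    intro x _
    have hxrep : x = (3*c)⁻¹ • ((f + c • 1) x) - (3*c)⁻¹ • ((f - ((2:ℂ)^g) • 1) x) := by
      rw [← smul_sub]
      have hd : (f + c • 1) x - (f - ((2:ℂ)^g) • 1) x = (3*c) • x := by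
        simp only [LinearMap.add_apply, LinearMap.sub_apply, LinearMap.smul_apply,
          Module.End.one_apply]
        rw [hb]
        module
      rw [hd, smul_smul, inv_mul_cancel₀ h3ne, one_smul]
    rw [hxrep]
    exact Submodule.sub_mem _
      (Submodule.mem_sup_right (W.smul_mem _ (hWmem x)))
      (Submodule.mem_sup_left (V.smul_mem _ (hVmem x)))
  have hcompl : IsCompl V W := ⟨hdisj, hcodis⟩
  -- dimensions
  set u : ℕ := 2 ^ (g - 1) with hu
  have hu1 : 1 ≤ u := Nat.one_le_two_pow
  have hcu : c = (u : ℂ) := by rw [hc, hu]; push_cast; ring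
  set N : ℕ := Fintype.card {m : Char2 g // IsEvenChar m} with hN
  have hNval : N = 2 * (u * u) + u := by
    rw [hN, card_even hg, hu]
    have h1 : 2 ^ (2 * g - 1) = 2 * (2 ^ (g-1) * 2 ^ (g-1)) := by
      rw [← pow_add, ← pow_succ']
      congr 1
      omega
    omega
  have hrank : Module.finrank ℂ ({m : Char2 g // IsEvenChar m} → ℂ) = N :=
    Module.finrank_fintype_fun_eq_card ℂ
  have htrf : LinearMap.trace ℂ _ f = (N : ℂ) := by
    rw [hf, fayMplus_eq, LinearMap.trace_eq_matrix_trace ℂ (Pi.basisFun ℂ _),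
      LinearMap.toMatrix_eq_toMatrix', LinearMap.toMatrix'_toLin']
    have hps : ∀ m : {m : Char2 g // IsEvenChar m}, pairing m.1 m.1 = 0 := by
      intro m
      have h2 : ∀ x : ZMod 2, x + x = 0 := by decide
      rw [pairing, dotProduct_comm (bPart m.1) (aPart m.1), h2]
    rw [Matrix.trace]
    simp only [Matrix.diag_apply, Emat, Matrix.of_apply, eSign, hps, sgn2]
    simp [hN, Finset.card_univ]
  set P : Module.End ℂ ({m : Char2 g // IsEvenChar m} → ℂ) := (3*c)⁻¹ • (f + c • 1) with hP
  have hProj : LinearMap.IsProj W P := by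
    constructor
    · intro x
      exact W.smul_mem _ (hWmem x)
    · intro x hx
      rw [hmemW] at hx
      rw [hP]
      simp only [LinearMap.smul_apply, LinearMap.add_apply, Module.End.one_apply, hx]
      rw [← add_smul, hb, smul_smul]
      rw [show (2 * c + c) = 3 * c by ring, inv_mul_cancel₀ h3ne, one_smul]
  have htrP : LinearMap.trace ℂ _ P = (Module.finrank ℂ W : ℂ) := hProj.trace
  have htrPval : LinearMap.trace ℂ _ P = (3*c)⁻¹ * ((N : ℂ) + c * N) := by
    rw [hP, _root_.map_smul, map_add, htrf, _root_.map_smul, LinearMap.trace_one, hrank]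
    simp [smul_eq_mul]
  have hdW : 3 * Module.finrank ℂ W = (2*u+1) * (u+1) := by
    have h1 : (3*c) * (Module.finrank ℂ W : ℂ) = (N:ℂ) + c * N := by
      rw [← htrP, htrPval, ← mul_assoc, mul_inv_cancel₀ h3ne, one_mul]
    rw [hcu, hNval] at h1
    have h2 : (u:ℂ) * (3 * (Module.finrank ℂ W : ℂ)) = (u:ℂ) * ((2*u+1) * (u+1)) := by
      push_cast at h1 ⊢
      linear_combination h1
    have hune : (u:ℂ) ≠ 0 := Nat.cast_ne_zero.mpr (by omega)
    have h3 := mul_left_cancel₀ hune h2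
    exact_mod_cast h3
  have hsum : Module.finrank ℂ V + Module.finrank ℂ W = N := by
    rw [← hrank]
    exact Submodule.finrank_add_eq_of_isCompl hcompl
  have hA : 3 * Module.finrank ℂ W = 2*(u*u) + 3*u + 1 := by rw [hdW]; ring
  have hB : Module.finrank ℂ V + Module.finrank ℂ W = 2*(u*u) + u := by rw [hsum, hNval]
  have hC : 1 ≤ u * u := by
    calc 1 = 1 * 1 := by ring
    _ ≤ u * u := Nat.mul_le_mul hu1 hu1
  have hdWpos : 0 < Module.finrank ℂ W := by omega
  have hdVpos : 0 < Module.finrank ℂ V := by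
    generalize u * u = w at hA hB hC
    omega
  have hev1 : Module.End.HasEigenvalue f (-(2:ℂ)^(g-1)) := by
    rw [Module.End.hasEigenvalue_iff]
    intro hbot
    rw [← hV] at hbot
    rw [hbot, finrank_bot] at hdVpos
    exact absurd hdVpos (lt_irrefl 0)
  have hev2 : Module.End.HasEigenvalue f ((2:ℂ)^g) := by
    rw [Module.End.hasEigenvalue_iff]
    intro hbot
    rw [← hW] at hbot
    rw [hbot, finrank_bot] at hdWpos
    exact absurd hdWpos (lt_irrefl 0)
  refine ⟨hev1, hev2, huniq, hcompl, ?_, ?_⟩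
  · have h2g : (2:ℕ) ^ (2*g) = 4 * (u * u) := by
      rw [hu, ← pow_add, show (4:ℕ) = 2^2 by norm_num, ← pow_add]
      congr 1
      omega
    rw [h2g]
    generalize u * u = w at hA hB hC ⊢
    omega
  · have h2gn : (2:ℕ) ^ g = 2 * u := by
      rw [hu, ← pow_succ']
      congr 1
      omega
    rw [h2gn, show (2*u+1)*(u+1) = 2*(u*u)+3*u+1 by ring]
    generalize u * u = w at hA hB hC ⊢
    omega
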